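/- For the kick-model, the instantaneous shape change rotates the angular momentum as L_t = Rₓ(-χ) L_s with χ = ∫₀^π I⁻¹ₓₓ(α) Aₓ(α) dα: precisely, if L solves L' = (I⁻¹ₓₓ(α(t)) Aₓ(α(t)) α'(t)) (e₁ × L) on [0,τ] with α(0) = π, α(τ) = 0, and α monotone differentiable, then L(τ) = Rₓ(-χ) L(0). -/

import Mathlib

open Matrix Real Set

/-! The angle `φ(t) = ∫_π^{α(t)} Iₓₓ⁻¹ Aₓ` satisfies `φ' = Iₓₓ⁻¹(α) Aₓ(α) α'` by the chain rule, so
the ODE says that `L` is rotated about `e₁` at angular speed `φ'`. Since `θ ↦ Rx θ` is the flow of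
`u ↦ e₁ ⨯₃ u`, the vector `Rx (-φ t) L(t)` has zero derivative; hence
`L(τ) = Rx (φ τ - φ 0) L(0)`, and `φ τ - φ 0 = ∫_π^0 Iₓₓ⁻¹ Aₓ = -χ`. -/

/-- Rotation about the x-axis by angle `θ`. -/
noncomputable def Rx (θ : ℝ) : Matrix (Fin 3) (Fin 3) ℝ :=
  !![1, 0, 0; 0, Real.cos θ, -Real.sin θ; 0, Real.sin θ, Real.cos θ]

lemma Rx_zero : Rx 0 = 1 := by
  ext i j
  fin_cases i <;> fin_cases j <;> simp [Rx]

lemma Rx_mul_Rx (s t : ℝ) : Rx s * Rx t = Rx (s + t) := by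
  ext i j
  fin_cases i <;> fin_cases j <;>
    simp [Rx, Matrix.mul_apply, Fin.sum_univ_three, cos_add, sin_add] <;> ring

lemma Rx_mulVec (θ : ℝ) (u : Fin 3 → ℝ) :
    Rx θ *ᵥ u = ![u 0, cos θ * u 1 - sin θ * u 2, sin θ * u 1 + cos θ * u 2] := by
  ext i
  fin_cases i <;> simp [Rx, mulVec, dotProduct, Fin.sum_univ_three, sub_eq_add_neg]

lemma hasDerivAt_Rx_neg_mulVec {φ : ℝ → ℝ} {v : ℝ → Fin 3 → ℝ} {ω t : ℝ}
    (hφ : HasDerivAt φ ω t) (hv : HasDerivAt v (ω • (![1, 0, 0] ⨯₃ v t)) t) :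
    HasDerivAt (fun s => Rx (-φ s) *ᵥ v s) 0 t := by
  have hv0 : HasDerivAt (fun s => v s 0) 0 t := by
    simpa [cross_apply] using hasDerivAt_pi.1 hv 0
  have hv1 : HasDerivAt (fun s => v s 1) (-(ω * v t 2)) t := by
    simpa [cross_apply] using hasDerivAt_pi.1 hv 1
  have hv2 : HasDerivAt (fun s => v s 2) (ω * v t 1) t := by
    simpa [cross_apply] using hasDerivAt_pi.1 hv 2
  simp only [Rx_mulVec]
  refine hasDerivAt_pi.2 fun i => ?_
  rw [Pi.zero_apply]
  fin_cases i
  · exact hv0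
  · exact ((hφ.neg.cos.mul hv1).sub (hφ.neg.sin.mul hv2)).congr_deriv (by ring)
  · exact ((hφ.neg.sin.mul hv1).add (hφ.neg.cos.mul hv2)).congr_deriv (by ring)

theorem eq_Rx_mulVec_of_hasDerivAt {φ ω : ℝ → ℝ} {v : ℝ → Fin 3 → ℝ} {a b : ℝ} (hab : a ≤ b)
    (hφ : ∀ t ∈ Icc a b, HasDerivAt φ (ω t) t)
    (hv : ∀ t ∈ Icc a b, HasDerivAt v (ω t • (![1, 0, 0] ⨯₃ v t)) t) :
    v b = Rx (φ b - φ a) *ᵥ v a := by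
  have hconst : Rx (-φ b) *ᵥ v b = Rx (-φ a) *ᵥ v a := by
    have hw (t) (ht : t ∈ Icc a b) := hasDerivAt_Rx_neg_mulVec (hφ t ht) (hv t ht)
    exact constant_of_has_deriv_right_zero
      (fun t ht => (hw t ht).continuousAt.continuousWithinAt)
      (fun t ht => (hw t (Ico_subset_Icc_self ht)).hasDerivWithinAt) b (right_mem_Icc.2 hab)
  calc v b = Rx (φ b) *ᵥ (Rx (-φ b) *ᵥ v b) := by
        rw [mulVec_mulVec, Rx_mul_Rx, add_neg_cancel, Rx_zero, one_mulVec]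
    _ = Rx (φ b - φ a) *ᵥ v a := by
        rw [hconst, mulVec_mulVec, Rx_mul_Rx, ← sub_eq_add_neg]

theorem kick_model_tilt_general
    (τ : ℝ) (hτ : 0 < τ)
    (α : ℝ → ℝ) (hα : Differentiable ℝ α)
    (h0 : α 0 = π) (h1 : α τ = 0)
    (Ixxinv Ax : ℝ → ℝ) (hI : Continuous Ixxinv) (hA : Continuous Ax)
    (L : ℝ → Fin 3 → ℝ)
    (hode : ∀ t ∈ Icc 0 τ,
      HasDerivAt L ((Ixxinv (α t) * Ax (α t) * deriv α t) •
        ((![1, 0, 0] : Fin 3 → ℝ) ⨯₃ (L t))) t)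
    (χ : ℝ) (hχ : χ = ∫ a in (0:ℝ)..π, Ixxinv a * Ax a) :
    L τ = (Rx (-χ)).mulVec (L 0) := by
  set φ : ℝ → ℝ := fun t => ∫ a in π..α t, Ixxinv a * Ax a
  have hφ (t : ℝ) : HasDerivAt φ (Ixxinv (α t) * Ax (α t) * deriv α t) t :=
    ((hI.mul hA).integral_hasStrictDerivAt π (α t)).hasDerivAt.comp t (hα t).hasDerivAt
  have hangle : φ τ - φ 0 = -χ := by
    simp only [φ, h0, h1, intervalIntegral.integral_same, sub_zero]
    rw [intervalIntegral.integral_symm, hχ]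
  rw [← hangle]
  exact eq_Rx_mulVec_of_hasDerivAt hτ.le (fun t _ => hφ t) hode

/-- In the kick-model, the instantaneous shape change rotates the angular
momentum as `L(τ) = Rₓ(-χ) L(0)` with `χ = ∫₀^π Iₓₓ⁻¹(α) Aₓ(α) dα`, where `L` solves
`L' = (Iₓₓ⁻¹(α(t)) Aₓ(α(t)) α'(t)) (e₁ × L)` on `[0, τ]` with `α(0) = π`, `α(τ) = 0`,
and `α` monotone (strictly decreasing) and C¹. -/
theorem kick_model_tilt
    (τ : ℝ) (hτ : 0 < τ)
    (α : ℝ → ℝ) (hα : Differentiable ℝ α) (hα' : Continuous (deriv α))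
    (hmono : StrictAntiOn α (Icc 0 τ)) (h0 : α 0 = π) (h1 : α τ = 0)
    (Ixxinv Ax : ℝ → ℝ) (hI : Continuous Ixxinv) (hA : Continuous Ax)
    (L : ℝ → Fin 3 → ℝ)
    (hode : ∀ t ∈ Icc 0 τ,
      HasDerivAt L ((Ixxinv (α t) * Ax (α t) * deriv α t) •
        ((![1, 0, 0] : Fin 3 → ℝ) ⨯₃ (L t))) t)
    (χ : ℝ) (hχ : χ = ∫ a in (0:ℝ)..π, Ixxinv a * Ax a) :
    L τ = (Rx (-χ)).mulVec (L 0) :=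
  kick_model_tilt_general τ hτ α hα h0 h1 Ixxinv Ax hI hA L hode χ hχ
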